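/- The control operator W^T f = u^f(T) maps the N-dimensional subspace F_1^T = span{S_k(T-·) : k = 1,...,N} of L²(0,T) bijectively onto ℂ^N; in particular the system is exactly controllable from F_1^T. -/

import Mathlib

/-!
On `F₁ᵀ`, in the coordinates `c` of `f = ∑ⱼ cⱼ Sⱼ(T - ·)`, the operator `Wᵀ` is the matrix
`Φᵀ · diag(1/ρ) · Gᵀ`, where the rows of `Φ` are the eigenvectors `φ(λₖ)` and
`Gⱼₖ = ∫₀ᵀ Sⱼ Sₖ` is the Gram matrix of the kernels. Each factor is invertible: eigenvectors for
distinct eigenvalues are independent, `ρₖ ≥ φₖ(1)² = 1`, and `G` is the Gram matrix of functions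
that are linearly independent on `(0, T)`, because `∂ₜ² Sₖ = -λₖ Sₖ` reduces a vanishing
combination to a Vandermonde system.
-/

/-- The wave kernel `S(t,λ)`: `sin(√λ t)/√λ` for `λ > 0`,
`sinh(√(-λ) t)/√(-λ)` for `λ < 0`, and `t` for `λ = 0`. -/
noncomputable def S (t lam : ℝ) : ℝ :=
  if 0 < lam then Real.sin (Real.sqrt lam * t) / Real.sqrt lam
  else if lam < 0 then Real.sinh (Real.sqrt (-lam) * t) / Real.sqrt (-lam)
  else t

open Set Matrix

noncomputable def cosKernel (t lam : ℝ) : ℝ :=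
  if 0 < lam then Real.cos (Real.sqrt lam * t)
  else if lam < 0 then Real.cosh (Real.sqrt (-lam) * t)
  else 1

lemma hasDerivAt_S (lam t : ℝ) : HasDerivAt (S · lam) (cosKernel t lam) t := by
  have hlin (c : ℝ) : HasDerivAt (c * ·) c t := by simpa using (hasDerivAt_id t).const_mul c
  rcases lt_trichotomy lam 0 with hneg | rfl | hpos
  · have hs : Real.sqrt (-lam) ≠ 0 := (Real.sqrt_pos.mpr (neg_pos.mpr hneg)).ne'
    simp only [S, cosKernel, if_neg hneg.not_gt, if_pos hneg]
    exact ((hlin _).sinh.div_const _).congr_deriv (mul_div_cancel_right₀ _ hs)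
  · simpa [S, cosKernel] using hasDerivAt_id' t
  · have hs : Real.sqrt lam ≠ 0 := (Real.sqrt_pos.mpr hpos).ne'
    simp only [S, cosKernel, if_pos hpos]
    exact ((hlin _).sin.div_const _).congr_deriv (mul_div_cancel_right₀ _ hs)

lemma hasDerivAt_cosKernel (lam t : ℝ) :
    HasDerivAt (cosKernel · lam) (-lam * S t lam) t := by
  have hlin (c : ℝ) : HasDerivAt (c * ·) c t := by simpa using (hasDerivAt_id t).const_mul c
  rcases lt_trichotomy lam 0 with hneg | rfl | hpos
  · have hsq := Real.sq_sqrt (neg_pos.mpr hneg).le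
    have hs : Real.sqrt (-lam) ≠ 0 := (Real.sqrt_pos.mpr (neg_pos.mpr hneg)).ne'
    simp only [S, cosKernel, if_neg hneg.not_gt, if_pos hneg]
    convert (hlin (Real.sqrt (-lam))).cosh using 1
    field_simp
    linear_combination (-Real.sinh (Real.sqrt (-lam) * t)) * hsq
  · simpa [S, cosKernel] using hasDerivAt_const t (1 : ℝ)
  · have hsq := Real.sq_sqrt hpos.le
    have hs : Real.sqrt lam ≠ 0 := (Real.sqrt_pos.mpr hpos).ne'
    simp only [S, cosKernel, if_pos hpos]
    convert (hlin (Real.sqrt lam)).cos using 1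
    field_simp
    linear_combination Real.sin (Real.sqrt lam * t) * hsq

lemma cosKernel_sq_add_mul_S_sq (lam t : ℝ) : cosKernel t lam ^ 2 + lam * S t lam ^ 2 = 1 := by
  rcases lt_trichotomy lam 0 with hneg | rfl | hpos
  · have hsq := Real.sq_sqrt (neg_pos.mpr hneg).le
    have hs : Real.sqrt (-lam) ≠ 0 := (Real.sqrt_pos.mpr (neg_pos.mpr hneg)).ne'
    simp only [S, cosKernel, if_neg hneg.not_gt, if_pos hneg]
    field_simp
    linear_combination Real.sqrt (-lam) ^ 2 * Real.cosh_sq_sub_sinh_sq (Real.sqrt (-lam) * t)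
      + Real.sinh (Real.sqrt (-lam) * t) ^ 2 * hsq
  · simp [S, cosKernel]
  · have hsq := Real.sq_sqrt hpos.le
    have hs : Real.sqrt lam ≠ 0 := (Real.sqrt_pos.mpr hpos).ne'
    simp only [S, cosKernel, if_pos hpos]
    field_simp
    linear_combination Real.sqrt lam ^ 2 * Real.cos_sq_add_sin_sq (Real.sqrt lam * t)
      - Real.sin (Real.sqrt lam * t) ^ 2 * hsq

lemma continuous_S (lam : ℝ) : Continuous (S · lam) :=
  continuous_iff_continuousAt.mpr fun t => (hasDerivAt_S lam t).continuousAt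

lemma eqOn_zero_of_hasDerivAt {𝕜 E : Type*} [NontriviallyNormedField 𝕜] [NormedAddCommGroup E]
    [NormedSpace 𝕜 E] {U : Set 𝕜} (hU : IsOpen U) {F F' : 𝕜 → E}
    (hF : ∀ t ∈ U, HasDerivAt F (F' t) t) (h0 : EqOn F 0 U) : EqOn F' 0 U := by
  intro t ht
  rw [← (hF t ht).deriv]
  simpa using h0.deriv hU ht

section LinearIndependence

variable {ι : Type*} [Fintype ι] {U : Set ℝ} (lam : ι → ℝ)

lemma eqOn_zero_sum_mul_cosKernel_of_S (hU : IsOpen U) (a : ι → ℝ)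
    (h : EqOn (fun t => ∑ j, a j * S t (lam j)) 0 U) :
    EqOn (fun t => ∑ j, a j * cosKernel t (lam j)) 0 U :=
  eqOn_zero_of_hasDerivAt hU
    (fun t _ => HasDerivAt.fun_sum fun j _ => (hasDerivAt_S (lam j) t).const_mul (a j)) h

lemma eqOn_zero_sum_mul_S_of_cosKernel (hU : IsOpen U) (a : ι → ℝ)
    (h : EqOn (fun t => ∑ j, a j * cosKernel t (lam j)) 0 U) :
    EqOn (fun t => ∑ j, a j * -lam j * S t (lam j)) 0 U := by
  refine eqOn_zero_of_hasDerivAt hU (fun t _ => ?_) h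
  refine (HasDerivAt.fun_sum fun j _ =>
    (hasDerivAt_cosKernel (lam j) t).const_mul (a j)).congr_deriv ?_
  exact Finset.sum_congr rfl fun j _ => by ring

lemma eqOn_zero_sum_mul_pow_mul_S (hU : IsOpen U) (a : ι → ℝ)
    (h : EqOn (fun t => ∑ j, a j * S t (lam j)) 0 U) (n : ℕ) :
    EqOn (fun t => ∑ j, a j * (-lam j) ^ n * S t (lam j)) 0 U := by
  induction n with
  | zero => simpa using h
  | succ n ih =>
    simpa only [pow_succ, mul_assoc] using
      eqOn_zero_sum_mul_S_of_cosKernel lam hU _ (eqOn_zero_sum_mul_cosKernel_of_S lam hU _ ih)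

end LinearIndependence

lemma linearIndependent_S {n : ℕ} {U : Set ℝ} (hU : IsOpen U) (hne : U.Nonempty)
    {lam : Fin n → ℝ} (hlam : Function.Injective lam) :
    LinearIndependent ℝ fun k => U.domRestrict (S · (lam k)) := by
  rw [Fintype.linearIndependent_iff]
  intro a ha
  have hS : EqOn (fun t => ∑ j, a j * S t (lam j)) 0 U := fun t ht => by
    simpa [Finset.sum_apply, Set.domRestrict] using congrFun ha ⟨t, ht⟩
  obtain ⟨t, ht⟩ := hne
  -- Vandermonde in the `-λⱼ`, applied to the derivatives of all orders at the point `t`.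
  have hneg : Function.Injective (-lam) := neg_injective.comp hlam
  have vanish (F : ℝ → ℝ) (hF : ∀ i : ℕ, ∑ j, a j * (-lam j) ^ i * F (lam j) = 0) (j : Fin n) :
      a j * F (lam j) = 0 :=
    congrFun (eq_zero_of_forall_pow_sum_mul_pow_eq_zero (f := -lam)
      (v := fun j => a j * F (lam j)) hneg fun i => by simpa [mul_right_comm] using hF i) j
  have hSj := vanish (S t) fun i => eqOn_zero_sum_mul_pow_mul_S lam hU a hS i ht
  have hCj := vanish (cosKernel t) fun i => by
    simpa [mul_assoc] using
      eqOn_zero_sum_mul_cosKernel_of_S lam hU _ (eqOn_zero_sum_mul_pow_mul_S lam hU a hS i) ht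
  intro j
  have hone := cosKernel_sq_add_mul_S_sq (lam j) t
  rcases mul_eq_zero.mp (hSj j) with h | hSz
  · exact h
  rcases mul_eq_zero.mp (hCj j) with h | hCz
  · exact h
  · simp [hSz, hCz] at hone

section Gram

variable {ι : Type*} [Fintype ι] (g : ι → ℝ → ℝ) (a b : ℝ)

noncomputable def integralGram : Matrix ι ι ℝ :=
  Matrix.of fun j k => ∫ t in a..b, g j t * g k t

variable {g a b}

lemma dotProduct_integralGram_mulVec (hg : ∀ j, Continuous (g j)) (x : ι → ℝ) :
    x ⬝ᵥ integralGram g a b *ᵥ x = ∫ t in a..b, (∑ j, x j * g j t) ^ 2 := by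
  have hc (j k : ι) : Continuous fun t => x j * g j t * (x k * g k t) :=
    ((hg j).const_mul (x j)).mul ((hg k).const_mul (x k))
  simp_rw [sq, Finset.sum_mul_sum, dotProduct, mulVec, dotProduct, integralGram, of_apply]
  rw [intervalIntegral.integral_finsetSum fun j _ =>
    (continuous_finsetSum _ fun k _ => hc j k).intervalIntegrable a b]
  refine Finset.sum_congr rfl fun j _ => ?_
  rw [intervalIntegral.integral_finsetSum fun k _ => (hc j k).intervalIntegrable a b,
    Finset.mul_sum]
  refine Finset.sum_congr rfl fun k _ => ?_
  rw [← intervalIntegral.integral_mul_const, ← intervalIntegral.integral_const_mul]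
  congr 1 with t
  ring

lemma isUnit_integralGram [DecidableEq ι] (hab : a < b) (hg : ∀ j, Continuous (g j))
    (hli : LinearIndependent ℝ fun j => (Ioo a b).domRestrict (g j)) :
    IsUnit (integralGram g a b) := by
  rw [← mulVec_injective_iff_isUnit, ← coe_mulVecLin, injective_iff_map_eq_zero]
  intro x hx
  have hsq : ∫ t in a..b, (∑ j, x j * g j t) ^ 2 = 0 := by
    rw [← dotProduct_integralGram_mulVec hg, ← coe_mulVecLin, hx, dotProduct_zero]
  have hvanish : ∀ t ∈ Ioo a b, ∑ j, x j * g j t = 0 := fun t ht => by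
    by_contra hne
    refine (intervalIntegral.integral_pos hab ?_ (fun s _ => sq_nonneg _)
      ⟨t, Ioo_subset_Icc_self ht, by positivity⟩).ne' hsq
    exact (continuous_finsetSum _ fun j _ => (hg j).const_mul (x j)).pow 2 |>.continuousOn
  funext j
  refine Fintype.linearIndependent_iff.mp hli x (funext fun t => ?_) j
  simpa [Finset.sum_apply, Set.domRestrict] using hvanish t t.2

end Gram

lemma isUnit_of_rows_hasEigenvector {ι K : Type*} [Fintype ι] [DecidableEq ι] [Field K]
    (A P : Matrix ι ι K) {lam : ι → K} (hlam : Function.Injective lam)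
    (heig : ∀ k, A *ᵥ P k = lam k • P k) (hne : ∀ k, P k ≠ 0) : IsUnit P :=
  linearIndependent_rows_iff_isUnit.mp <|
    Module.End.eigenvectors_linearIndependent' (toLin' A) lam hlam P fun k =>
      ⟨Module.End.mem_eigenspace_iff.mpr (heig k), hne k⟩

lemma existsUnique_mem_span_range_of_isUnit {ι K V : Type*} [Fintype ι] [DecidableEq ι] [Field K]
    [AddCommGroup V] [Module K V] (g : ι → V) (W : V → ι → K) {M : Matrix ι ι K} (hM : IsUnit M)
    (hW : ∀ c, W (∑ j, c j • g j) = M *ᵥ c) (y : ι → K) :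
    ∃! f, f ∈ Submodule.span K (range g) ∧ W f = y := by
  obtain ⟨c, rfl⟩ := mulVec_surjective_iff_isUnit.mpr hM y
  refine ⟨∑ j, c j • g j, ⟨(Submodule.mem_span_range_iff_exists_fun K).mpr ⟨c, rfl⟩, hW c⟩, ?_⟩
  rintro f ⟨hf, hWf⟩
  obtain ⟨c', rfl⟩ := (Submodule.mem_span_range_iff_exists_fun K).mp hf
  obtain rfl := mulVec_injective_iff_isUnit.mpr hM ((hW c').symm.trans hWf)
  rfl

lemma integral_sum_smul_S_sub_mul_S_sub {ι : Type*} [Fintype ι] (T : ℝ) (lam : ι → ℝ)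
    (c : ι → ℂ) (k : ι) :
    ∫ τ in (0:ℝ)..T, (∑ j, c j • fun t : ℝ => (S (T - t) (lam j) : ℂ)) τ * (S (T - τ) (lam k) : ℂ)
      = ∑ j, c j * integralGram (fun j t => S t (lam j)) 0 T j k := by
  have hS (l : ℝ) : Continuous fun τ => S (T - τ) l := (continuous_S l).comp (continuous_sub_left T)
  have hc (j : ι) : Continuous fun τ => c j * ((S (T - τ) (lam j) * S (T - τ) (lam k) : ℝ) : ℂ) :=
    continuous_const.mul <| Complex.continuous_ofReal.comp <| (hS _).mul (hS _)
  simp only [Finset.sum_apply, Pi.smul_apply, smul_eq_mul, Finset.sum_mul, mul_assoc,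
    ← Complex.ofReal_mul]
  rw [intervalIntegral.integral_finsetSum fun j _ => (hc j).intervalIntegrable 0 T]
  refine Finset.sum_congr rfl fun j _ => ?_
  rw [intervalIntegral.integral_const_mul, intervalIntegral.integral_ofReal,
    intervalIntegral.integral_comp_sub_left (fun t => S t (lam j) * S t (lam k))]
  simp [integralGram]

lemma map_ofReal_mulVec_transpose_mul_diagonal_mul_transpose {ι : Type*} [Fintype ι]
    [DecidableEq ι] (P G : Matrix ι ι ℝ) (d : ι → ℝ) (c : ι → ℂ) :
    Complex.ofRealHom.mapMatrix (Pᵀ * diagonal d * Gᵀ) *ᵥ c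
      = fun i => ∑ k, (d k : ℂ) * (∑ j, c j * G j k) * P k i := by
  simp only [map_mul, ← mulVec_mulVec, RingHom.mapMatrix_apply, diagonal_map (map_zero _),
    transpose_map]
  funext i
  simp only [mulVec_transpose, mulVec_diagonal, vecMul, dotProduct, map_apply,
    Complex.ofRealHom_eq_coe]

/-- the control operator `W^T f = u^f(T)` maps the `N`-dimensional
subspace `F₁^T = span{Sₖ(T-·)}` bijectively onto `ℂ^N`: every state `y ∈ ℂ^N`
is reached by a unique control from `F₁^T` (exact controllability). -/
theorem control_operator_bijective_on_F1
    (N : ℕ) (hN : 0 < N) (T : ℝ) (hT : 0 < T)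
    (A : Matrix (Fin N) (Fin N) ℝ)
    (lam : Fin N → ℝ) (hlam : Function.Injective lam)
    (phiv : Fin N → Fin N → ℝ)
    (heig : ∀ k : Fin N, A.mulVec (phiv k) = lam k • phiv k)
    (hfirst : ∀ k : Fin N, phiv k ⟨0, hN⟩ = 1)
    (rho : Fin N → ℝ)
    (hrho : ∀ k : Fin N, rho k = ∑ n : Fin N, (phiv k n) ^ 2)
    (W : (ℝ → ℂ) → (Fin N → ℂ))
    (hW : ∀ (f : ℝ → ℂ),
      W f = fun i => ∑ k : Fin N,
        (1 / (rho k : ℂ)) * (∫ τ in (0:ℝ)..T, f τ * (S (T - τ) (lam k) : ℂ))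
          * (phiv k i : ℂ)) :
    ∀ y : Fin N → ℂ, ∃! f : ℝ → ℂ,
      f ∈ Submodule.span ℂ
          (Set.range fun k : Fin N => fun t : ℝ => (S (T - t) (lam k) : ℂ)) ∧
        W f = y := by
  set G := integralGram (fun k t => S t (lam k)) 0 T
  have hG : IsUnit G := isUnit_integralGram hT (fun k => continuous_S _)
    (linearIndependent_S isOpen_Ioo ⟨T / 2, by linarith, by linarith⟩ hlam)
  have hP : IsUnit (Matrix.of phiv) := isUnit_of_rows_hasEigenvector A _ hlam heig
    fun k h => by simpa [hfirst] using congrFun h ⟨0, hN⟩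
  have hrho_pos (k : Fin N) : 0 < rho k := by
    rw [hrho k]
    calc (0 : ℝ) < phiv k ⟨0, hN⟩ ^ 2 := by simp [hfirst]
      _ ≤ _ := Finset.single_le_sum (fun n _ => sq_nonneg (phiv k n)) (Finset.mem_univ _)
  have hD : IsUnit (diagonal fun k => (rho k)⁻¹) :=
    isUnit_diagonal.mpr (Pi.isUnit_iff.mpr fun k => (inv_pos.mpr (hrho_pos k)).ne'.isUnit)
  have hM := ((((isUnit_transpose _).mpr hP).mul hD).mul ((isUnit_transpose _).mpr hG)).map
    Complex.ofRealHom.mapMatrix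
  refine existsUnique_mem_span_range_of_isUnit _ W hM fun c => ?_
  rw [hW, map_ofReal_mulVec_transpose_mul_diagonal_mul_transpose]
  simp only [integral_sum_smul_S_sub_mul_S_sub, Complex.ofReal_inv, one_div]
  rfl
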